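/- Let k be a finite field of order p^d, B = 𝔽_p[s], and ω the basic Drinfeld B-module with ω_s = τ^d over k. For n | n', the trace-type maps ω_{(s^{n'}-1)/(s^n-1)}: k_{n'} → k_n (where k_m ⊂ k^alg is the field of p^{md} elements, equal to ker ω_{s^m-1}) form an inverse system, and there is an isomorphism of the restricted adelic Tate module T°_ad(ω) = Hom_B(B_{(s)}/B, (k^alg, ω)) with lim←_n k_n, sending ℓ to the system (ζ_n) with ζ_n = ℓ(1/(s^n-1) + B). -/

import Mathlib

/-!
Every `b ∈ 𝔽_p[s]` with `b(0) ≠ 0` divides some `s^n - 1`, since `s` is a unit of the finite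
ring `𝔽_p[s]/(b)`; hence every element of `B_{(s)}` is `b/(s^n - 1)`, and for `n ∣ n'` it is
also `(b · (s^{n'} - 1)/(s^n - 1))/(s^{n'} - 1)`. So a `B`-linear `ℓ` on `B_{(s)}/B` is
determined by the values `ζ_n = ℓ(1/(s^n - 1))`, which lie in `ker ω_{s^n - 1} = k_n` and are
compatible under the trace-type maps. Conversely a compatible system defines
`ℓ(b/(s^n - 1)) = ω_b(ζ_n)`; two representatives of the same element give the same value once
both are moved to a common level.
-/

noncomputable section

variable (p d : ℕ) [Fact p.Prime] (k : Type) [Field k] [Fintype k] [CharP k p]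

instance : CharP (AlgebraicClosure k) p :=
  charP_of_injective_algebraMap (algebraMap k (AlgebraicClosure k)).injective p

instance : (Ideal.span {(Polynomial.X : Polynomial (ZMod p))}).IsPrime :=
  (Ideal.span_singleton_prime Polynomial.X_ne_zero).mpr Polynomial.prime_X

/-- `B_{(s)}`: the localization of `B = 𝔽_p[s]` at the prime ideal `(s)`. -/
abbrev BLoc := Localization.AtPrime (Ideal.span {(Polynomial.X : Polynomial (ZMod p))})

/-- The image of `B` in `B_{(s)}`, as an additive subgroup. -/
def BImage : AddSubgroup (BLoc p) :=
  (algebraMap (Polynomial (ZMod p)) (BLoc p)).range.toAddSubgroup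

/-- `Q = B_{(s)}/B`. -/
abbrev QMod := BLoc p ⧸ BImage p

/-- The action of `b ∈ B` on `k^alg` through the basic Drinfeld module `ω_s = τ^d`:
`evω b y = ∑ᵢ bᵢ · y^{p^{d·i}}`. -/
def evω (b : Polynomial (ZMod p)) (y : AlgebraicClosure k) : AlgebraicClosure k :=
  ∑ i ∈ Finset.range (b.natDegree + 1),
    (ZMod.castHom (dvd_refl p) (AlgebraicClosure k)) (b.coeff i) * y ^ p ^ (d * i)

/-- `k_m = ker ω_{s^m - 1}`, the subfield of `p^{dm}` elements of `k^alg`. -/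
def kLevel (m : ℕ) : Set (AlgebraicClosure k) := {x | x ^ p ^ (d * m) = x}

/-- The exact quotient `(s^{n'} - 1)/(s^n - 1)` in `B`. -/
def trPoly (n n' : ℕ) : Polynomial (ZMod p) :=
  (Polynomial.X ^ n' - 1) / (Polynomial.X ^ n - 1)

/-- `B`-linearity of an additive map `ℓ : Q → k^alg` for the module structure via `ω`. -/
def IsOmegaLinear (ℓ : QMod p →+ AlgebraicClosure k) : Prop :=
  ∀ (b : Polynomial (ZMod p)) (u : BLoc p),
    ℓ (QuotientAddGroup.mk (algebraMap (Polynomial (ZMod p)) (BLoc p) b * u)) =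
      evω p d k b (ℓ (QuotientAddGroup.mk u))

/-- A compatible system `(ζ_n)_{n ≥ 1}` in `lim←_n k_n` for the trace-type transition maps. -/
def IsCompat (ζ : ℕ → AlgebraicClosure k) : Prop :=
  (∀ n : ℕ, 0 < n → ζ n ∈ kLevel p d k n) ∧
    ∀ n n' : ℕ, 0 < n → 0 < n' → n ∣ n' → evω p d k (trPoly p n n') (ζ n') = ζ n


open Polynomial

section BasicDrinfeld

variable (F : Type*) [Field F] [Fintype F] (R : Type*) [CommRing R] [Algebra F R]

lemma FiniteField.frobeniusAlgHom_toLinearMap_pow_apply (n : ℕ) (y : R) :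
    ((frobeniusAlgHom F R).toLinearMap ^ n) y = y ^ Fintype.card F ^ n := by
  rw [Module.End.pow_apply]
  induction n generalizing y with
  | zero => simp
  | succ n ih => rw [Function.iterate_succ_apply, ih]; simp [← pow_mul, pow_succ']

def basicDrinfeld : F[X] →ₐ[F] Module.End F R :=
  aeval ((FiniteField.frobeniusAlgHom F R).toLinearMap ^ d)

lemma basicDrinfeld_apply (b : F[X]) (y : R) :
    basicDrinfeld d F R b y =
      ∑ i ∈ Finset.range (b.natDegree + 1), b.coeff i • y ^ Fintype.card F ^ (d * i) := by
  simp [basicDrinfeld, aeval_eq_sum_range, ← pow_mul,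
    FiniteField.frobeniusAlgHom_toLinearMap_pow_apply]

lemma basicDrinfeld_X_pow_apply (n : ℕ) (y : R) :
    basicDrinfeld d F R (X ^ n) y = y ^ Fintype.card F ^ (d * n) := by
  simp [basicDrinfeld, ← pow_mul, FiniteField.frobeniusAlgHom_toLinearMap_pow_apply]

end BasicDrinfeld

section OmegaAction

omit [Fintype k]

instance : Algebra (ZMod p) (AlgebraicClosure k) := ZMod.algebra _ p

lemma evω_eq_basicDrinfeld_apply (b : (ZMod p)[X]) (y : AlgebraicClosure k) :
    evω p d k b y = basicDrinfeld d (ZMod p) (AlgebraicClosure k) b y := by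
  rw [evω, basicDrinfeld_apply, ZMod.card]
  exact Finset.sum_congr rfl fun i _ => (Algebra.smul_def _ _).symm

lemma evω_mul (a b : (ZMod p)[X]) (y : AlgebraicClosure k) :
    evω p d k (a * b) y = evω p d k a (evω p d k b y) := by
  simp [evω_eq_basicDrinfeld_apply]

lemma evω_add (a b : (ZMod p)[X]) (y : AlgebraicClosure k) :
    evω p d k (a + b) y = evω p d k a y + evω p d k b y := by
  simp [evω_eq_basicDrinfeld_apply]

lemma evω_one (y : AlgebraicClosure k) : evω p d k 1 y = y := by
  simp [evω_eq_basicDrinfeld_apply]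

lemma evω_apply_zero (b : (ZMod p)[X]) : evω p d k b 0 = 0 := by
  simp [evω_eq_basicDrinfeld_apply]

lemma mem_kLevel_iff {n : ℕ} {x : AlgebraicClosure k} :
    x ∈ kLevel p d k n ↔ evω p d k (X ^ n - 1) x = 0 := by
  rw [kLevel, Set.mem_ofPred_eq, evω_eq_basicDrinfeld_apply, map_sub, map_one,
    LinearMap.sub_apply, basicDrinfeld_X_pow_apply, ZMod.card, Module.End.one_apply, sub_eq_zero]

end OmegaAction

lemma Polynomial.exists_dvd_X_pow_sub_one {F : Type*} [Field F] [Finite F] {f : F[X]}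
    (hf : f.coeff 0 ≠ 0) : ∃ n, 0 < n ∧ f ∣ X ^ n - 1 := by
  have hf0 : f ≠ 0 := fun h => hf (by simp [h])
  have : Finite (AdjoinRoot f) :=
    have := (AdjoinRoot.powerBasis hf0).finite
    Module.finite_of_finite F
  -- `X` is invertible modulo `f` because `X ∤ f`, so it has finite order in `(F[X]/f)ˣ`
  obtain ⟨a, c, hac⟩ : IsCoprime X f :=
    (Irreducible.coprime_iff_not_dvd irreducible_X).mpr (by rwa [X_dvd_iff])
  obtain ⟨u, hu⟩ : IsUnit (AdjoinRoot.mk f X) := .of_mul_eq_one (AdjoinRoot.mk f a) <| by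
    simpa [mul_comm, AdjoinRoot.mk_self] using congrArg (AdjoinRoot.mk f) hac
  refine ⟨orderOf u, orderOf_pos u, AdjoinRoot.mk_eq_zero.mp ?_⟩
  rw [map_sub, map_pow, map_one, ← hu, ← Units.val_pow_eq_pow_val, pow_orderOf_eq_one,
    Units.val_one, sub_self]

lemma mem_primeCompl_span_X_iff {f : (ZMod p)[X]} :
    f ∈ (Ideal.span {(X : (ZMod p)[X])}).primeCompl ↔ f.coeff 0 ≠ 0 :=
  (Ideal.mem_span_singleton.trans X_dvd_iff).not

lemma X_pow_sub_one_mem_primeCompl {n : ℕ} (hn : 0 < n) :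
    (X ^ n - 1 : (ZMod p)[X]) ∈ (Ideal.span {(X : (ZMod p)[X])}).primeCompl := by
  rw [mem_primeCompl_span_X_iff]
  simp [coeff_X_pow, hn.ne]

lemma isUnit_algebraMap_X_pow_sub_one {n : ℕ} (hn : 0 < n) :
    IsUnit (algebraMap (ZMod p)[X] (BLoc p) (X ^ n - 1)) :=
  IsLocalization.map_units (BLoc p) ⟨_, X_pow_sub_one_mem_primeCompl p hn⟩

lemma algebraMap_BLoc_injective : Function.Injective (algebraMap (ZMod p)[X] (BLoc p)) :=
  IsLocalization.injective (BLoc p)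
    (Ideal.primeCompl_le_nonZeroDivisors (Ideal.span {(X : (ZMod p)[X])}))

lemma exists_X_pow_sub_one_mul_eq_algebraMap (x : BLoc p) :
    ∃ (n : ℕ) (b : (ZMod p)[X]), 0 < n ∧
      algebraMap (ZMod p)[X] (BLoc p) (X ^ n - 1) * x = algebraMap _ _ b := by
  obtain ⟨a, s, rfl⟩ :=
    IsLocalization.exists_mk'_eq (Ideal.span {(X : (ZMod p)[X])}).primeCompl x
  obtain ⟨n, hn, c, hc⟩ := exists_dvd_X_pow_sub_one ((mem_primeCompl_span_X_iff p).mp s.2)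
  refine ⟨n, c * a, hn, ?_⟩
  rw [hc, map_mul, mul_comm (algebraMap _ _ (s : (ZMod p)[X])), mul_assoc,
    IsLocalization.mk'_spec' (BLoc p) a s, map_mul]

lemma mk_algebraMap_eq_zero (b : (ZMod p)[X]) :
    (QuotientAddGroup.mk (algebraMap (ZMod p)[X] (BLoc p) b) : QMod p) = 0 :=
  (QuotientAddGroup.eq_zero_iff _).mpr ⟨b, rfl⟩

lemma X_pow_sub_one_mul_trPoly {n N : ℕ} (hn : 0 < n) (h : n ∣ N) :
    (X ^ n - 1 : (ZMod p)[X]) * trPoly p n N = X ^ N - 1 := by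
  obtain ⟨c, rfl⟩ := h
  refine EuclideanDomain.mul_div_cancel' (X_pow_sub_C_ne_zero hn 1) ?_
  simpa [pow_mul] using sub_dvd_pow_sub_pow ((X : (ZMod p)[X]) ^ n) 1 c

lemma algebraMap_X_pow_sub_one_mul_of_dvd {x : BLoc p} {b : (ZMod p)[X]} {n N : ℕ}
    (hn : 0 < n) (hnN : n ∣ N)
    (hb : algebraMap (ZMod p)[X] (BLoc p) (X ^ n - 1) * x = algebraMap _ _ b) :
    algebraMap (ZMod p)[X] (BLoc p) (X ^ N - 1) * x = algebraMap _ _ (trPoly p n N * b) := by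
  rw [← X_pow_sub_one_mul_trPoly p hn hnN, map_mul, map_mul, mul_right_comm, hb, mul_comm]

section TateModule

omit [Fintype k]

variable {p d k}

lemma mapsTo_evω_trPoly_kLevel {n n' : ℕ} (hn : 0 < n) (h : n ∣ n') :
    Set.MapsTo (evω p d k (trPoly p n n')) (kLevel p d k n') (kLevel p d k n) := by
  intro x hx
  rw [mem_kLevel_iff] at hx ⊢
  rw [← evω_mul, X_pow_sub_one_mul_trPoly p hn h, hx]

section TateSystem

variable {M : Type*} [AddCommMonoid M]

def tateSystem (ℓ : QMod p →+ M) (n : ℕ) : M :=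
  ℓ (QuotientAddGroup.mk (Ring.inverse (algebraMap (ZMod p)[X] (BLoc p) (X ^ n - 1))))

lemma apply_mk_eq_tateSystem (ℓ : QMod p →+ M) {n : ℕ} {u : BLoc p}
    (hu : algebraMap (ZMod p)[X] (BLoc p) (X ^ n - 1) * u = 1) :
    ℓ (QuotientAddGroup.mk u) = tateSystem ℓ n := by
  rw [tateSystem, left_inv_eq_right_inv (Ring.inverse_mul_cancel _ (.of_mul_eq_one u hu)) hu]

end TateSystem

section OmegaLinear

variable {ℓ : QMod p →+ AlgebraicClosure k}

lemma IsOmegaLinear.isCompat_tateSystem (hℓ : IsOmegaLinear p d k ℓ) :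
    IsCompat p d k (tateSystem ℓ) := by
  refine ⟨fun n hn => ?_, fun n n' hn hn' h => ?_⟩
  · rw [mem_kLevel_iff, tateSystem, ← hℓ,
      Ring.mul_inverse_cancel _ (isUnit_algebraMap_X_pow_sub_one p hn),
      ← map_one (algebraMap (ZMod p)[X] (BLoc p)), mk_algebraMap_eq_zero, map_zero]
  · rw [tateSystem, ← hℓ]
    refine apply_mk_eq_tateSystem ℓ ?_
    rw [← mul_assoc, ← map_mul, X_pow_sub_one_mul_trPoly p hn h,
      Ring.mul_inverse_cancel _ (isUnit_algebraMap_X_pow_sub_one p hn')]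

-- every element of `B_{(s)}` is `b · u` with `(s^n - 1) u = 1`
lemma IsOmegaLinear.ext {ℓ' : QMod p →+ AlgebraicClosure k} (hℓ : IsOmegaLinear p d k ℓ)
    (hℓ' : IsOmegaLinear p d k ℓ')
    (h : ∀ (n : ℕ) (u : BLoc p), 0 < n →
      algebraMap (ZMod p)[X] (BLoc p) (X ^ n - 1) * u = 1 →
        ℓ (QuotientAddGroup.mk u) = ℓ' (QuotientAddGroup.mk u)) :
    ℓ = ℓ' := by
  refine AddMonoidHom.ext fun q => QuotientAddGroup.induction_on q fun x => ?_
  obtain ⟨n, b, hn, hb⟩ := exists_X_pow_sub_one_mul_eq_algebraMap p x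
  set u := Ring.inverse (algebraMap (ZMod p)[X] (BLoc p) (X ^ n - 1))
  have hu : algebraMap (ZMod p)[X] (BLoc p) (X ^ n - 1) * u = 1 :=
    Ring.mul_inverse_cancel _ (isUnit_algebraMap_X_pow_sub_one p hn)
  have hx : x = algebraMap _ _ b * u := by rw [← hb, mul_comm _ x, mul_assoc, hu, mul_one]
  rw [hx, hℓ, hℓ', h n u hn hu]

end OmegaLinear

namespace IsCompat

variable {ζ : ℕ → AlgebraicClosure k} (hζ : IsCompat p d k ζ)
include hζ

-- both representatives of `x` are pushed to the common level `n * m`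
lemma evω_eq_evω_of_mul_eq {x : BLoc p} {b c : (ZMod p)[X]} {n m : ℕ} (hn : 0 < n) (hm : 0 < m)
    (hb : algebraMap (ZMod p)[X] (BLoc p) (X ^ n - 1) * x = algebraMap _ _ b)
    (hc : algebraMap (ZMod p)[X] (BLoc p) (X ^ m - 1) * x = algebraMap _ _ c) :
    evω p d k b (ζ n) = evω p d k c (ζ m) := by
  have hN : 0 < n * m := Nat.mul_pos hn hm
  have key : trPoly p n (n * m) * b = trPoly p m (n * m) * c :=
    algebraMap_BLoc_injective p <|
      (algebraMap_X_pow_sub_one_mul_of_dvd p hn (dvd_mul_right n m) hb).symm.trans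
        (algebraMap_X_pow_sub_one_mul_of_dvd p hm (dvd_mul_left m n) hc)
  rw [← hζ.2 n _ hn hN (dvd_mul_right n m), ← hζ.2 m _ hm hN (dvd_mul_left m n), ← evω_mul,
    ← evω_mul, mul_comm b, mul_comm c, key]

lemma exists_forall_evω_eq (x : BLoc p) :
    ∃ v, ∀ (n : ℕ) (b : (ZMod p)[X]), 0 < n →
      algebraMap (ZMod p)[X] (BLoc p) (X ^ n - 1) * x = algebraMap _ _ b →
        evω p d k b (ζ n) = v := by
  obtain ⟨m, c, hm, hc⟩ := exists_X_pow_sub_one_mul_eq_algebraMap p x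
  exact ⟨_, fun n b hn hb => hζ.evω_eq_evω_of_mul_eq hn hm hb hc⟩

def liftFun (x : BLoc p) : AlgebraicClosure k := (hζ.exists_forall_evω_eq x).choose

lemma liftFun_eq {x : BLoc p} {b : (ZMod p)[X]} {n : ℕ} (hn : 0 < n)
    (hb : algebraMap (ZMod p)[X] (BLoc p) (X ^ n - 1) * x = algebraMap _ _ b) :
    hζ.liftFun x = evω p d k b (ζ n) :=
  ((hζ.exists_forall_evω_eq x).choose_spec n b hn hb).symm

lemma liftFun_add (x y : BLoc p) : hζ.liftFun (x + y) = hζ.liftFun x + hζ.liftFun y := by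
  obtain ⟨n, b, hn, hb⟩ := exists_X_pow_sub_one_mul_eq_algebraMap p x
  obtain ⟨m, c, hm, hc⟩ := exists_X_pow_sub_one_mul_eq_algebraMap p y
  have hN : 0 < n * m := Nat.mul_pos hn hm
  have hbN := algebraMap_X_pow_sub_one_mul_of_dvd p hn (dvd_mul_right n m) hb
  have hcN := algebraMap_X_pow_sub_one_mul_of_dvd p hm (dvd_mul_left m n) hc
  rw [hζ.liftFun_eq hN (by rw [mul_add, hbN, hcN, ← map_add]), hζ.liftFun_eq hN hbN,
    hζ.liftFun_eq hN hcN, evω_add]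

lemma liftFun_algebraMap (b : (ZMod p)[X]) : hζ.liftFun (algebraMap _ _ b) = 0 := by
  rw [hζ.liftFun_eq one_pos (by rw [← map_mul, mul_comm]), evω_mul,
    (mem_kLevel_iff p d k).mp (hζ.1 1 one_pos), evω_apply_zero]

def lift : QMod p →+ AlgebraicClosure k :=
  QuotientAddGroup.lift _ (AddMonoidHom.mk' hζ.liftFun hζ.liftFun_add) <| by
    rintro _ ⟨b, rfl⟩
    exact hζ.liftFun_algebraMap b

lemma lift_mk {x : BLoc p} {b : (ZMod p)[X]} {n : ℕ} (hn : 0 < n)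
    (hb : algebraMap (ZMod p)[X] (BLoc p) (X ^ n - 1) * x = algebraMap _ _ b) :
    hζ.lift (QuotientAddGroup.mk x) = evω p d k b (ζ n) :=
  hζ.liftFun_eq hn hb

lemma isOmegaLinear_lift : IsOmegaLinear p d k hζ.lift := by
  intro b x
  obtain ⟨n, c, hn, hc⟩ := exists_X_pow_sub_one_mul_eq_algebraMap p x
  rw [hζ.lift_mk hn hc, hζ.lift_mk hn (b := b * c) (by rw [mul_left_comm, hc, map_mul]), evω_mul]

lemma lift_mk_of_mul_eq_one {n : ℕ} {u : BLoc p} (hn : 0 < n)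
    (hu : algebraMap (ZMod p)[X] (BLoc p) (X ^ n - 1) * u = 1) :
    hζ.lift (QuotientAddGroup.mk u) = ζ n := by
  rw [hζ.lift_mk hn (b := 1) (by rw [hu, map_one]), evω_one]

end IsCompat

end TateModule

theorem basic_drinfeld_tate_module_as_inverse_limit :
    -- (i) the trace-type maps form an inverse system on the `k_n`:
    (∀ n n' : ℕ, 0 < n → 0 < n' → n ∣ n' →
      ∀ x ∈ kLevel p d k n', evω p d k (trPoly p n n') x ∈ kLevel p d k n) ∧
    -- (ii) each `B`-linear `ℓ` induces a compatible system `ζ_n = ℓ([1/(s^n-1)])`: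
    (∀ ℓ : QMod p →+ AlgebraicClosure k, IsOmegaLinear p d k ℓ →
      ∃ ζ : ℕ → AlgebraicClosure k, IsCompat p d k ζ ∧
        ∀ (n : ℕ) (u : BLoc p), 0 < n →
          algebraMap (Polynomial (ZMod p)) (BLoc p) (Polynomial.X ^ n - 1) * u = 1 →
          ℓ (QuotientAddGroup.mk u) = ζ n) ∧
    -- (iii) every compatible system comes from a unique `B`-linear `ℓ`:
    (∀ ζ : ℕ → AlgebraicClosure k, IsCompat p d k ζ →
      ∃! ℓ : {ℓ : QMod p →+ AlgebraicClosure k // IsOmegaLinear p d k ℓ},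
        ∀ (n : ℕ) (u : BLoc p), 0 < n →
          algebraMap (Polynomial (ZMod p)) (BLoc p) (Polynomial.X ^ n - 1) * u = 1 →
          (ℓ : QMod p →+ AlgebraicClosure k) (QuotientAddGroup.mk u) = ζ n) := by
  refine ⟨fun n n' hn _ h => mapsTo_evω_trPoly_kLevel hn h, ?_, ?_⟩
  · intro ℓ hℓ
    exact ⟨tateSystem ℓ, hℓ.isCompat_tateSystem,
      fun n u _ hu => apply_mk_eq_tateSystem ℓ hu⟩
  · intro ζ hζ
    refine ⟨⟨hζ.lift, hζ.isOmegaLinear_lift⟩,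
      fun n u hn hu => hζ.lift_mk_of_mul_eq_one hn hu, ?_⟩
    rintro ⟨ℓ, hℓ⟩ hℓζ
    refine Subtype.ext (hℓ.ext hζ.isOmegaLinear_lift fun n u hn hu => ?_)
    exact (hℓζ n u hn hu).trans (hζ.lift_mk_of_mul_eq_one hn hu).symm

end
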